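/- Let s ≥ 3 be an odd integer. For every complex number t with Re t > 1, ∑ (−1)^(∑_p ⌊v_p(n)/s⌋) · n^(−t) = ζ(t)·ζ(2st) / (ζ(2t)·ζ(st)), where the sum runs over all positive integers n such that every exponent in the prime factorization of n is congruent to 0 or 1 modulo s, and ζ denotes the Riemann zeta function. -/

import Mathlib

/-!
The coefficient of `n ^ (-t)` is `∏_p w(v_p(n))`, where `w e = (-1) ^ ⌊e / s⌋` if
`e ≡ 0, 1 (mod s)` and `w e = 0` otherwise. It is therefore multiplicative, and the series has an
Euler product whose factor at `p` is `∑_e w(e) xᵉ` with `x = p ^ (-t)`. Since `w (e + s) = -w e`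
and the first `s` terms add up to `1 + x`, this factor is
`(1 + x) / (1 + xˢ) = (1 - x²)(1 - xˢ) / ((1 - x)(1 - x²ˢ))`, which is the factor at `p` of
`ζ(t) ζ(2st) / (ζ(2t) ζ(st))`.
-/

open Complex

lemma one_add_ne_zero_of_norm_lt_one {R : Type*} [NormedRing R] [NormOneClass R] {x : R}
    (hx : ‖x‖ < 1) : 1 + x ≠ 0 := by
  intro h
  rw [eq_neg_of_add_eq_zero_right h, norm_neg, norm_one] at hx
  exact lt_irrefl 1 hx

lemma norm_prime_cpow_neg_lt_one (p : Nat.Primes) {t : ℂ} (ht : 0 < t.re) :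
    ‖((p : ℕ) : ℂ) ^ (-t)‖ < 1 := by
  rw [norm_natCast_cpow_of_pos p.prop.pos, neg_re]
  exact Real.rpow_lt_one_of_one_lt_of_neg (by exact_mod_cast p.prop.one_lt) (neg_neg_of_pos ht)

lemma one_lt_re_natCast_mul {t : ℂ} (ht : 1 < t.re) {k : ℕ} (hk : k ≠ 0) :
    1 < ((k : ℂ) * t).re := by
  rw [← ofReal_natCast, re_ofReal_mul]
  exact one_lt_mul_of_le_of_lt (Nat.one_le_cast.mpr (Nat.pos_of_ne_zero hk)) ht

section FactorizationProd

variable {M : Type*} [CommMonoid M]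

-- Beware that `factorizationProd g 0 = 1`, since `Nat.factorization 0 = 0`.
noncomputable def factorizationProd (g : ℕ → M) (n : ℕ) : M :=
  n.factorization.prod fun _ e => g e

lemma factorizationProd_one (g : ℕ → M) : factorizationProd g 1 = 1 := by
  simp [factorizationProd]

lemma factorizationProd_mul (g : ℕ → M) {m n : ℕ} (h : m.Coprime n) :
    factorizationProd g (m * n) = factorizationProd g m * factorizationProd g n := by
  refine (congrArg (Finsupp.prod · _) (Nat.factorization_mul_of_coprime h)).trans ?_
  refine Finsupp.prod_add_index_of_disjoint ?_ _
  simpa only [Nat.support_factorization] using h.disjoint_primeFactors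

lemma factorizationProd_prime_pow {g : ℕ → M} (hg : g 0 = 1) {p : ℕ} (hp : p.Prime) (e : ℕ) :
    factorizationProd g (p ^ e) = g e := by
  rw [factorizationProd, hp.factorization_pow, Finsupp.prod_single_index hg]

end FactorizationProd

lemma norm_factorizationProd_le_one {R : Type*} [NormedCommRing R] [NormMulClass R]
    [NormOneClass R] {g : ℕ → R} (hg : ∀ e, ‖g e‖ ≤ 1) (n : ℕ) :
    ‖factorizationProd g n‖ ≤ 1 := by
  rw [factorizationProd, Finsupp.prod, norm_prod]
  exact Finset.prod_le_one (fun _ _ => norm_nonneg _) fun _ _ => hg _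

lemma LSeries_eulerProduct_hasProd_of_mul {f : ℕ → ℂ} (hf₁ : f 1 = 1)
    (hmul : ∀ {m n : ℕ}, m.Coprime n → f (m * n) = f m * f n) {t : ℂ}
    (hf : LSeriesSummable f t) :
    HasProd (fun p : Nat.Primes => ∑' e, LSeries.term f t (p ^ e)) (LSeries f t) := by
  refine EulerProduct.eulerProduct_hasProd ?_ (fun {m n} h => ?_) hf.norm (LSeries.term_zero f t)
  · simp [hf₁]
  · rcases eq_or_ne m 0 with rfl | hm
    · simp
    rcases eq_or_ne n 0 with rfl | hn
    · simp
    simp only [LSeries.term_of_ne_zero (mul_ne_zero hm hn), LSeries.term_of_ne_zero hm,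
      LSeries.term_of_ne_zero hn, hmul h, Nat.cast_mul, natCast_mul_natCast_cpow]
    ring

lemma LSeries_factorizationProd_hasProd {g : ℕ → ℂ} (hg₀ : g 0 = 1) (hg : ∀ e, ‖g e‖ ≤ 1)
    {t : ℂ} (ht : 1 < t.re) :
    HasProd (fun p : Nat.Primes => ∑' e, g e * (((p : ℕ) : ℂ) ^ (-t)) ^ e)
      (LSeries (factorizationProd g) t) := by
  have hsum : LSeriesSummable (factorizationProd g) t :=
    LSeriesSummable_of_bounded_of_one_lt_re (fun n _ => norm_factorizationProd_le_one hg n) ht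
  convert LSeries_eulerProduct_hasProd_of_mul (factorizationProd_one g)
    (factorizationProd_mul g) hsum using 2 with p
  refine tsum_congr fun e => ?_
  rw [LSeries.term_of_ne_zero (pow_ne_zero e p.prop.ne_zero),
    factorizationProd_prime_pow hg₀ p.prop, div_eq_mul_inv, ← cpow_neg, Nat.cast_pow,
    ← natCast_cpow_natCast_mul, cpow_nat_mul]

lemma riemannZeta_natCast_mul_eulerProduct_hasProd {t : ℂ} (ht : 1 < t.re) {k : ℕ}
    (hk : k ≠ 0) :
    HasProd (fun p : Nat.Primes => (1 - (((p : ℕ) : ℂ) ^ (-t)) ^ k)⁻¹)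
      (riemannZeta (k * t)) := by
  convert riemannZeta_eulerProduct_hasProd (one_lt_re_natCast_mul ht hk) using 3 with p
  rw [← mul_neg, cpow_nat_mul]

lemma one_add_div_one_add_pow_mul_inv_mul_inv {x : ℂ} (hx : ‖x‖ < 1) {s : ℕ} (hs : s ≠ 0) :
    (1 + x) / (1 + x ^ s) * (1 - x ^ 2)⁻¹ * (1 - x ^ s)⁻¹ =
      (1 - x)⁻¹ * (1 - x ^ (2 * s))⁻¹ := by
  have hxs : ‖x ^ s‖ < 1 := by simpa only [norm_pow] using pow_lt_one₀ (norm_nonneg x) hx hs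
  have h₁ := one_add_ne_zero_of_norm_lt_one hx
  have h₂ := one_add_ne_zero_of_norm_lt_one hxs
  have h₃ := one_add_ne_zero_of_norm_lt_one (x := -x) (by rwa [norm_neg])
  have h₄ := one_add_ne_zero_of_norm_lt_one (x := -x ^ s) (by rwa [norm_neg])
  rw [← sub_eq_add_neg] at h₃ h₄
  rw [show 1 - x ^ 2 = (1 - x) * (1 + x) by ring, pow_mul',
    show 1 - (x ^ s) ^ 2 = (1 - x ^ s) * (1 + x ^ s) by ring]
  field_simp

def expWeight (s e : ℕ) : ℂ := if e % s = 0 ∨ e % s = 1 then (-1) ^ (e / s) else 0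

lemma expWeight_zero (s : ℕ) : expWeight s 0 = 1 := by simp [expWeight]

lemma norm_expWeight_le_one (s e : ℕ) : ‖expWeight s e‖ ≤ 1 := by
  unfold expWeight
  split_ifs <;> simp

lemma expWeight_add_self {s : ℕ} (hs : s ≠ 0) (e : ℕ) :
    expWeight s (e + s) = -expWeight s e := by
  simp only [expWeight, Nat.add_mod_right, Nat.add_div_right e (Nat.pos_of_ne_zero hs), pow_succ]
  split_ifs <;> simp

lemma sum_range_expWeight_mul_pow {s : ℕ} (hs : 2 ≤ s) (x : ℂ) :
    ∑ e ∈ Finset.range s, expWeight s e * x ^ e = 1 + x := by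
  rw [← Finset.sum_subset (Finset.range_subset_range.mpr hs)]
  · simp [Finset.sum_range_succ, expWeight, Nat.mod_eq_of_lt (by omega : 1 < s),
      Nat.div_eq_of_lt (by omega : 1 < s)]
  · intro e he he2
    simp only [Finset.mem_range, not_lt] at he he2
    have hbad : ¬(e % s = 0 ∨ e % s = 1) := by
      rw [Nat.mod_eq_of_lt he]
      omega
    rw [expWeight, if_neg hbad, zero_mul]

lemma hasSum_expWeight_mul_pow {s : ℕ} (hs : 2 ≤ s) {x : ℂ} (hx : ‖x‖ < 1) :
    HasSum (fun e => expWeight s e * x ^ e) ((1 + x) / (1 + x ^ s)) := by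
  have hsum : Summable fun e => expWeight s e * x ^ e :=
    Summable.of_norm_bounded (summable_geometric_of_lt_one (norm_nonneg x) hx) fun e => by
      rw [norm_mul, norm_pow]
      exact mul_le_of_le_one_left (by positivity) (norm_expWeight_le_one s e)
  have htail : ∑' e, expWeight s (e + s) * x ^ (e + s) =
      -x ^ s * ∑' e, expWeight s e * x ^ e := by
    rw [← tsum_mul_left]
    refine tsum_congr fun e => ?_
    rw [expWeight_add_self (by omega), pow_add]
    ring
  have hsplit := hsum.sum_add_tsum_nat_add s
  rw [sum_range_expWeight_mul_pow hs, htail] at hsplit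
  have hne : 1 + x ^ s ≠ 0 := one_add_ne_zero_of_norm_lt_one <| by
    simpa only [norm_pow] using pow_lt_one₀ (norm_nonneg x) hx (by omega : s ≠ 0)
  convert hsum.hasSum using 1
  rw [div_eq_iff hne]
  linear_combination hsplit

open Classical in
lemma factorizationProd_expWeight (s n : ℕ) :
    factorizationProd (expWeight s) n =
      if ∀ p : ℕ, p.Prime → n.factorization p % s = 0 ∨ n.factorization p % s = 1 then
        (-1) ^ ∑ p ∈ n.primeFactors, n.factorization p / s else 0 := by
  rw [factorizationProd, Finsupp.prod, Nat.support_factorization]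
  split_ifs with h
  · rw [← Finset.prod_pow_eq_pow_sum]
    exact Finset.prod_congr rfl fun p hp => if_pos (h p (Nat.prime_of_mem_primeFactors hp))
  · push Not at h
    obtain ⟨p, hp, h0, h1⟩ := h
    have hpn : p ∈ n.primeFactors := by
      rw [← Nat.support_factorization, Finsupp.mem_support_iff]
      rintro h
      simp [h] at h0
    exact Finset.prod_eq_zero hpn (if_neg (not_or.mpr ⟨h0, h1⟩))

lemma tsum_admissible_eq_LSeries (s : ℕ) (t : ℂ) :
    (∑' n : {n : ℕ // 0 < n ∧ ∀ p : ℕ, p.Prime →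
        n.factorization p % s = 0 ∨ n.factorization p % s = 1},
      (-1 : ℂ) ^ (∑ p ∈ (n : ℕ).primeFactors, (n : ℕ).factorization p / s) *
        ((n : ℕ) : ℂ) ^ (-t)) = LSeries (factorizationProd (expWeight s)) t := by
  refine (tsum_subtype (α := ℂ) {n : ℕ | 0 < n ∧ ∀ p : ℕ, p.Prime →
    n.factorization p % s = 0 ∨ n.factorization p % s = 1}
    fun n => (-1) ^ (∑ p ∈ n.primeFactors, n.factorization p / s) * (n : ℂ) ^ (-t)).trans
    (tsum_congr fun n => ?_)
  rcases eq_or_ne n 0 with rfl | hn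
  · simp
  rw [LSeries.term_of_ne_zero hn, factorizationProd_expWeight]
  by_cases h : ∀ p : ℕ, p.Prime → n.factorization p % s = 0 ∨ n.factorization p % s = 1
  · rw [Set.indicator_of_mem (by exact ⟨Nat.pos_of_ne_zero hn, h⟩), if_pos h, cpow_neg,
      div_eq_mul_inv]
  · rw [Set.indicator_of_notMem (by exact fun hn => h hn.2), if_neg h, zero_div]

theorem stmt_17_general (s : ℕ) (hs : 3 ≤ s) (t : ℂ) (ht : 1 < t.re) :
    (∑' n : {n : ℕ // 0 < n ∧ ∀ p : ℕ, p.Prime →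
        n.factorization p % s = 0 ∨ n.factorization p % s = 1},
      (-1 : ℂ) ^ (∑ p ∈ (n : ℕ).primeFactors, (n : ℕ).factorization p / s) *
        ((n : ℕ) : ℂ) ^ (-t)) =
      riemannZeta t * riemannZeta ((2 * s : ℕ) * t) /
        (riemannZeta (2 * t) * riemannZeta (s * t)) := by
  have hs₀ : s ≠ 0 := by omega
  have hx (p : Nat.Primes) := norm_prime_cpow_neg_lt_one p (t := t) (by linarith)
  have hζ (k : ℕ) (hk : k ≠ 0) := riemannZeta_natCast_mul_eulerProduct_hasProd ht hk
  have hL := LSeries_factorizationProd_hasProd (expWeight_zero s) (norm_expWeight_le_one s) ht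
  rw [funext fun p => (hasSum_expWeight_mul_pow (s := s) (by omega) (hx p)).tsum_eq] at hL
  have hlhs := (hL.mul (hζ 2 two_ne_zero)).mul (hζ s hs₀)
  beta_reduce at hlhs
  rw [funext fun p => one_add_div_one_add_pow_mul_inv_mul_inv (hx p) hs₀] at hlhs
  have hrhs := (hζ 1 one_ne_zero).mul (hζ (2 * s) (by omega))
  have hζ₂ := riemannZeta_ne_zero_of_one_lt_re (one_lt_re_natCast_mul ht two_ne_zero)
  have hζₛ := riemannZeta_ne_zero_of_one_lt_re (one_lt_re_natCast_mul ht hs₀)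
  simp only [Nat.cast_ofNat] at hlhs hζ₂
  simp only [pow_one, Nat.cast_one, one_mul] at hrhs
  rw [tsum_admissible_eq_LSeries, eq_div_iff (mul_ne_zero hζ₂ hζₛ), ← mul_assoc]
  exact hlhs.unique hrhs

/-- For odd `s ≥ 3` and `Re t > 1`, the signed Dirichlet series over positive integers all of
whose prime-factorization exponents are congruent to `0` or `1` modulo `s`, with sign
`(-1)^(∑_p ⌊v_p(n)/s⌋)`, equals `ζ(t) ζ(2st) / (ζ(2t) ζ(st))`. -/
theorem stmt_17 (s : ℕ) (hs : 3 ≤ s) (hodd : Odd s) (t : ℂ) (ht : 1 < t.re) :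
    (∑' n : {n : ℕ // 0 < n ∧ ∀ p : ℕ, p.Prime →
        n.factorization p % s = 0 ∨ n.factorization p % s = 1},
      (-1 : ℂ) ^ (∑ p ∈ (n : ℕ).primeFactors, (n : ℕ).factorization p / s) *
        ((n : ℕ) : ℂ) ^ (-t)) =
      riemannZeta t * riemannZeta ((2 * s : ℕ) * t) /
        (riemannZeta (2 * t) * riemannZeta (s * t)) :=
  stmt_17_general s hs t ht
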